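/- Every transposition (i j) of distinct indices i, j in Fin 36 can be written as a product of at most three legal moves. More precisely: if (i j) is itself a legal move it is a product of one legal move, and otherwise there exist legal moves t₁, t₂, t₃ (transpositions) with (i j) = t₁ · t₂ · t₃. -/
import Mathlib


/-- A permutation of `Fin 36` is a *legal move* if it is a transposition of two
distinct indices that lie in the same cube (`⌊x/6⌋ = ⌊y/6⌋`) or have the same
color (`x ≡ y [MOD 6]`). -/
def IsLegalMove (t : Equiv.Perm (Fin 36)) : Prop :=
  ∃ x y : Fin 36, x ≠ y ∧
    ((x : ℕ) / 6 = (y : ℕ) / 6 ∨ (x : ℕ) % 6 = (y : ℕ) % 6) ∧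
    t = Equiv.swap x y

/-- Every transposition `(i j)` of distinct indices in `Fin 36` is a product of
at most three legal moves: either it is itself a legal move, or it is a product
of three legal moves `t₁ · t₂ · t₃`. -/
theorem swap_eq_prod_of_at_most_three_legal_moves (i j : Fin 36) (hij : i ≠ j) :
    IsLegalMove (Equiv.swap i j) ∨
      ∃ t₁ t₂ t₃ : Equiv.Perm (Fin 36),
        IsLegalMove t₁ ∧ IsLegalMove t₂ ∧ IsLegalMove t₃ ∧
        Equiv.swap i j = t₁ * t₂ * t₃ := by
  by_cases h : (i : ℕ) / 6 = (j : ℕ) / 6 ∨ (i : ℕ) % 6 = (j : ℕ) % 6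
  · exact Or.inl ⟨i, j, hij, h, rfl⟩
  · push_neg at h
    obtain ⟨hdiv, hmod⟩ := h
    have hk : 6 * ((i : ℕ) / 6) + (j : ℕ) % 6 < 36 := by
      have h1 : (i : ℕ) < 36 := i.isLt
      have h2 : (j : ℕ) < 36 := j.isLt
      omega
    set k : Fin 36 := ⟨6 * ((i : ℕ) / 6) + (j : ℕ) % 6, hk⟩ with hkdef
    have hkval : (k : ℕ) = 6 * ((i : ℕ) / 6) + (j : ℕ) % 6 := rfl
    have hkd : (k : ℕ) / 6 = (i : ℕ) / 6 := by omega
    have hkm : (k : ℕ) % 6 = (j : ℕ) % 6 := by omega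
    have hki : k ≠ i := by
      intro h; apply hmod
      have := congrArg (fun x : Fin 36 => (x : ℕ) % 6) h
      simpa [hkm] using this.symm
    have hkj : k ≠ j := by
      intro h; apply hdiv
      have := congrArg (fun x : Fin 36 => (x : ℕ) / 6) h
      simpa [hkd] using this
    refine Or.inr ⟨Equiv.swap i k, Equiv.swap k j, Equiv.swap i k,
      ⟨i, k, hki.symm, Or.inl hkd.symm, rfl⟩,
      ⟨k, j, hkj, Or.inr hkm, rfl⟩,
      ⟨i, k, hki.symm, Or.inl hkd.symm, rfl⟩, ?_⟩
    have : Equiv.swap i k * Equiv.swap k j * (Equiv.swap i k)⁻¹ =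
        Equiv.swap (Equiv.swap i k k) (Equiv.swap i k j) :=
      (Equiv.swap_apply_apply _ k j).symm
    rw [Equiv.swap_inv] at this
    rw [this, Equiv.swap_apply_right, Equiv.swap_apply_of_ne_of_ne hij.symm hkj.symm]
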